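/- Let t > 0 and ε ∈ {−1,+1}. The function F_{t,ε} : ℝ² → ℝ is differentiable everywhere, with partial derivatives ∂F/∂x = −2x(4(x² + y²) + 2t² − 1) and ∂F/∂y = −2y(4(x² + y²) + 2εt² − 1); consequently the derivative of F_{t,ε} vanishes at (x,y) if and only if (x,y) = (0,0), or ε = +1 and x² + y² = (1 − 2t²)/4, or ε = −1 and either (x = 0 and y² = (1 + 2t²)/4) or (y = 0 and x² = (1 − 2t²)/4). -/

import Mathlib

/-- The Karigiannis–Leung Chern–Simons type functional, evaluated on the
connections A = i(a₁η₁ + a₂η₂ + a₃η₃) on the trivial complex line bundle over a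
compact 3-Sasakian 7-manifold with the coclosed G₂-structure φ_{t,ε}
(normalized so that Vol(X, g^{ts}) = 1), with x = a₃ and y² = a₁² + a₂²:
F_{t,ε}(x,y) = −[(x² + y²)(2(x² + y²) − 1) + 2t²(x² + εy²)]. -/
def F (t ε : ℝ) : ℝ × ℝ → ℝ := fun p =>
  -((p.1 ^ 2 + p.2 ^ 2) * (2 * (p.1 ^ 2 + p.2 ^ 2) - 1) + 2 * t ^ 2 * (p.1 ^ 2 + ε * p.2 ^ 2))

theorem ContinuousLinearMap.eq_zero_iff_apply_one_zero_and_apply_zero_one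
    {R M : Type*} [Semiring R] [TopologicalSpace R] [AddCommMonoid M] [Module R M]
    [TopologicalSpace M] (L : R × R →L[R] M) : L = 0 ↔ L (1, 0) = 0 ∧ L (0, 1) = 0 := by
  refine ⟨fun h => by simp [h], fun ⟨h₁, h₂⟩ => ?_⟩
  refine ContinuousLinearMap.ext fun ⟨a, b⟩ => ?_
  have : ((a, b) : R × R) = a • (1, 0) + b • (0, 1) := by simp
  rw [this, map_add, map_smul, map_smul, h₁, h₂]
  simp

def partialX (t x y : ℝ) : ℝ := -2 * x * (4 * (x ^ 2 + y ^ 2) + 2 * t ^ 2 - 1)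
def partialY (t ε x y : ℝ) : ℝ := -2 * y * (4 * (x ^ 2 + y ^ 2) + 2 * ε * t ^ 2 - 1)

theorem hasFDerivAt_F (t ε x y : ℝ) :
    HasFDerivAt (F t ε)
      (partialX t x y • ContinuousLinearMap.fst ℝ ℝ ℝ +
        partialY t ε x y • ContinuousLinearMap.snd ℝ ℝ ℝ) (x, y) := by
  have hx : HasFDerivAt (fun p : ℝ × ℝ => p.1) (ContinuousLinearMap.fst ℝ ℝ ℝ) (x, y) :=
    hasFDerivAt_fst
  have hy : HasFDerivAt (fun p : ℝ × ℝ => p.2) (ContinuousLinearMap.snd ℝ ℝ ℝ) (x, y) :=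
    hasFDerivAt_snd
  have hr := (hx.pow 2).add (hy.pow 2)
  have h := ((hr.mul ((hr.const_mul 2).sub_const 1)).add
    (((hx.pow 2).add ((hy.pow 2).const_mul ε)).const_mul (2 * t ^ 2))).neg
  refine (h.congr_fderiv ?_).congr_of_eventuallyEq (.of_forall fun p => ?_)
  · ext <;> simp [partialX, partialY] <;> ring
  · simp [F]

theorem fderiv_F (t ε x y : ℝ) :
    fderiv ℝ (F t ε) (x, y) =
      partialX t x y • ContinuousLinearMap.fst ℝ ℝ ℝ +
        partialY t ε x y • ContinuousLinearMap.snd ℝ ℝ ℝ :=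
  (hasFDerivAt_F t ε x y).fderiv

theorem fderiv_F_eq_zero_iff (t ε x y : ℝ) :
    fderiv ℝ (F t ε) (x, y) = 0 ↔ partialX t x y = 0 ∧ partialY t ε x y = 0 := by
  simp [ContinuousLinearMap.eq_zero_iff_apply_one_zero_and_apply_zero_one, fderiv_F]

theorem partialX_eq_zero_and_partialY_eq_zero_iff_of_one (t x y : ℝ) :
    partialX t x y = 0 ∧ partialY t 1 x y = 0 ↔
      (x = 0 ∧ y = 0) ∨ x ^ 2 + y ^ 2 = (1 - 2 * t ^ 2) / 4 := by
  have hsphere : 4 * (x ^ 2 + y ^ 2) + 2 * t ^ 2 - 1 = 0 ↔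
      x ^ 2 + y ^ 2 = (1 - 2 * t ^ 2) / 4 := by
    constructor <;> intro h <;> linarith
  simp only [partialX, partialY, mul_one, mul_eq_zero, neg_eq_zero, two_ne_zero, false_or, hsphere]
  tauto

theorem partialX_eq_zero_and_partialY_eq_zero_iff_of_neg_one {t : ℝ} (ht : t ≠ 0) (x y : ℝ) :
    partialX t x y = 0 ∧ partialY t (-1) x y = 0 ↔
      (x = 0 ∧ y = 0) ∨ (x = 0 ∧ y ^ 2 = (1 + 2 * t ^ 2) / 4) ∨
        (y = 0 ∧ x ^ 2 = (1 - 2 * t ^ 2) / 4) := by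
  simp only [partialX, partialY, mul_eq_zero, neg_eq_zero, two_ne_zero, false_or]
  constructor
  · rintro ⟨rfl | hx, rfl | hy⟩
    · simp
    · exact .inr <| .inl ⟨rfl, by linarith⟩
    · exact .inr <| .inr ⟨rfl, by linarith⟩
    -- the two brackets differ by `4 t ^ 2`, so they cannot vanish together
    · exact absurd (pow_eq_zero_iff two_ne_zero |>.mp (by linarith)) ht
  · rintro (⟨rfl, rfl⟩ | ⟨rfl, hy⟩ | ⟨rfl, hx⟩)
    · simp
    · exact ⟨.inl rfl, .inr (by linarith)⟩
    · exact ⟨.inr (by linarith), .inl rfl⟩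

/-- F_{t,ε} is differentiable, with ∂F/∂x = −2x(4(x²+y²) + 2t² − 1) and
∂F/∂y = −2y(4(x²+y²) + 2εt² − 1); its derivative vanishes at (x,y) iff
(x,y) = (0,0), or ε = +1 and x² + y² = (1 − 2t²)/4, or ε = −1 and either
(x = 0 and y² = (1 + 2t²)/4) or (y = 0 and x² = (1 − 2t²)/4). -/
theorem stmt_10 (t ε : ℝ) (ht : 0 < t) (hε : ε = 1 ∨ ε = -1) :
    Differentiable ℝ (F t ε) ∧
    (∀ x y : ℝ,
      fderiv ℝ (F t ε) (x, y) (1, 0) = -2 * x * (4 * (x ^ 2 + y ^ 2) + 2 * t ^ 2 - 1) ∧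
      fderiv ℝ (F t ε) (x, y) (0, 1) = -2 * y * (4 * (x ^ 2 + y ^ 2) + 2 * ε * t ^ 2 - 1)) ∧
    (∀ x y : ℝ,
      fderiv ℝ (F t ε) (x, y) = 0 ↔
        (x = 0 ∧ y = 0) ∨
        (ε = 1 ∧ x ^ 2 + y ^ 2 = (1 - 2 * t ^ 2) / 4) ∨
        (ε = -1 ∧ ((x = 0 ∧ y ^ 2 = (1 + 2 * t ^ 2) / 4) ∨
                   (y = 0 ∧ x ^ 2 = (1 - 2 * t ^ 2) / 4)))) := by
  refine ⟨fun p => (hasFDerivAt_F t ε p.1 p.2).differentiableAt,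
    fun x y => by simp [fderiv_F, partialX, partialY], fun x y => ?_⟩
  rw [fderiv_F_eq_zero_iff]
  rcases hε with rfl | rfl
  · rw [partialX_eq_zero_and_partialY_eq_zero_iff_of_one]
    norm_num
  · rw [partialX_eq_zero_and_partialY_eq_zero_iff_of_neg_one ht.ne']
    norm_num
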